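/- For every integer n ≥ 1, the generalized Fibonacci polynomial of Lucas type satisfies the explicit binomial formula 𝓛ₙ(x) = (1/α) · Σ_{i=0}^{⌊n/2⌋} (n/(n−i)) · C(n−i, i) · d(x)^{n−2i} · g(x)^{i} for all x ∈ ℝ. -/

import Mathlib

/-- Generalized Fibonacci polynomials of Lucas type:
`𝓛₀ = p₀`, `𝓛₁ = p₁`, `𝓛ₙ = d·𝓛ₙ₋₁ + g·𝓛ₙ₋₂` where `d = (2/p₀)·p₁`. -/
noncomputable def GFPL (p0 : ℝ) (p1 g : ℝ → ℝ) : ℕ → ℝ → ℝ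
  | 0 => fun _ => p0
  | 1 => fun x => p1 x
  | n + 2 => fun x =>
      (2 / p0) * p1 x * GFPL p0 p1 g (n + 1) x + g x * GFPL p0 p1 g n x

/-- Lucas coefficient: `n/(n-i) * C(n-i, i)` as a natural number. -/
def Lc (n : ℕ) : ℕ → ℕ
  | 0 => 1
  | (i+1) => Nat.choose (n - i - 1) (i + 1) +
      if i + 2 ≤ n then Nat.choose (n - i - 2) i else 0

lemma Lc_zero {n i : ℕ} (h : n < 2 * (i + 1)) : Lc n (i + 1) = 0 := by
  show Nat.choose (n - i - 1) (i + 1) + (if i + 2 ≤ n then Nat.choose (n - i - 2) i else 0) = 0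
  rw [Nat.choose_eq_zero_of_lt (by omega)]
  split
  · next h2 => rw [Nat.choose_eq_zero_of_lt (by omega)]
  · rfl

lemma Lc_pascal {n : ℕ} (hn : 1 ≤ n) (i : ℕ) :
    Lc (n + 2) (i + 1) = Lc (n + 1) (i + 1) + Lc n i := by
  rcases le_or_gt (2 * (i + 1)) (n + 2) with h | h
  · match i with
    | 0 =>
      simp only [Lc]
      rw [if_pos (by omega), if_pos (by omega)]
      have e1 : n + 2 - 0 - 1 = n + 1 := by omega
      have e2 : n + 2 - 0 - 2 = n := by omega
      have e3 : n + 1 - 0 - 1 = n := by omega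
      have e4 : n + 1 - 0 - 2 = n - 1 := by omega
      rw [e1, e2, e3, e4]
      simp [Nat.choose_one_right]
    | (j+1) =>
      obtain ⟨a, ha, haj⟩ : ∃ a, n = a + j + 2 ∧ j ≤ a := ⟨n - j - 2, by omega, by omega⟩
      subst ha
      simp only [Lc]
      rw [if_pos (by omega), if_pos (by omega), if_pos (by omega)]
      have e1 : a + j + 2 + 2 - (j + 1) - 1 = a + 2 := by omega
      have e2 : a + j + 2 + 2 - (j + 1) - 2 = a + 1 := by omega
      have e3 : a + j + 2 + 1 - (j + 1) - 1 = a + 1 := by omega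
      have e4 : a + j + 2 + 1 - (j + 1) - 2 = a := by omega
      have e5 : a + j + 2 - j - 1 = a + 1 := by omega
      have e6 : a + j + 2 - j - 2 = a := by omega
      rw [e1, e2, e3, e4, e5, e6]
      rw [Nat.choose_succ_succ (a + 1) (j + 1), Nat.choose_succ_succ a j]
      ring
  · rw [Lc_zero (by omega), Lc_zero (by omega)]
    match i with
    | 0 => omega
    | (j+1) => rw [Lc_zero (by omega)]

lemma mul_choose_eq (n i : ℕ) (hn : 1 ≤ n) (h2 : 2 * i ≤ n) :
    n * Nat.choose (n - i) i = (n - i) * Lc n i := by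
  match i with
  | 0 => simp [Lc]
  | (j+1) =>
    obtain ⟨a, ha, haj⟩ : ∃ a, n = a + j + 2 ∧ j ≤ a := ⟨n - j - 2, by omega, by omega⟩
    subst ha
    simp only [Lc]
    rw [if_pos (by omega)]
    have e1 : a + j + 2 - (j + 1) = a + 1 := by omega
    have e2 : a + j + 2 - j - 1 = a + 1 := by omega
    have e3 : a + j + 2 - j - 2 = a := by omega
    rw [e1, e2, e3]
    have key : (a + 1) * Nat.choose a j = Nat.choose (a + 1) (j + 1) * (j + 1) :=
      Nat.add_one_mul_choose_eq a j
    rw [Nat.mul_add, key]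
    ring

lemma sum_ext (D G : ℝ) {n K : ℕ} (hK : n / 2 ≤ K) :
    (∑ i ∈ Finset.range (n / 2 + 1), (Lc n i : ℝ) * D ^ (n - 2 * i) * G ^ i)
      = ∑ i ∈ Finset.range (K + 1), (Lc n i : ℝ) * D ^ (n - 2 * i) * G ^ i := by
  apply Finset.sum_subset
  · intro m hm
    simp only [Finset.mem_range] at *
    omega
  · intro i hi hni
    simp only [Finset.mem_range] at hi hni
    match i with
    | 0 => omega
    | (j+1) =>
      rw [Lc_zero (by omega)]
      simp

lemma sum_step (D G : ℝ) {n : ℕ} (hn : 1 ≤ n) :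
    (∑ i ∈ Finset.range ((n + 2) / 2 + 1), (Lc (n + 2) i : ℝ) * D ^ (n + 2 - 2 * i) * G ^ i)
      = D * (∑ i ∈ Finset.range ((n + 1) / 2 + 1), (Lc (n + 1) i : ℝ) * D ^ (n + 1 - 2 * i) * G ^ i)
        + G * (∑ i ∈ Finset.range (n / 2 + 1), (Lc n i : ℝ) * D ^ (n - 2 * i) * G ^ i) := by
  have hK : (n + 2) / 2 + 1 = (n / 2 + 1) + 1 := by omega
  rw [hK, sum_ext D G (n := n + 1) (K := n / 2 + 1) (by omega)]
  set K := n / 2 + 1 with hKdef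
  rw [Finset.sum_range_succ' _ K, Finset.sum_range_succ' (fun i => (Lc (n+1) i : ℝ) * D ^ (n + 1 - 2 * i) * G ^ i) K]
  have hterm : ∀ j ∈ Finset.range K,
      (Lc (n + 2) (j + 1) : ℝ) * D ^ (n + 2 - 2 * (j + 1)) * G ^ (j + 1)
        = D * ((Lc (n + 1) (j + 1) : ℝ) * D ^ (n + 1 - 2 * (j + 1)) * G ^ (j + 1))
          + G * ((Lc n j : ℝ) * D ^ (n - 2 * j) * G ^ j) := by
    intro j hj
    simp only [Finset.mem_range] at hj
    have h2j : 2 * j ≤ n := by omega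
    rw [Lc_pascal hn j]
    push_cast
    rcases eq_or_lt_of_le h2j with heq | hlt
    · have hz : Lc (n + 1) (j + 1) = 0 := Lc_zero (by omega)
      rw [hz]
      have e : n + 2 - 2 * (j + 1) = n - 2 * j := by omega
      rw [e]
      push_cast
      ring
    · have e : n + 2 - 2 * (j + 1) = (n + 1 - 2 * (j + 1)) + 1 := by omega
      have e2 : n + 2 - 2 * (j + 1) = n - 2 * j := by omega
      calc (↑(Lc (n + 1) (j + 1)) + ↑(Lc n j)) * D ^ (n + 2 - 2 * (j + 1)) * G ^ (j + 1)
          = (Lc (n + 1) (j + 1) : ℝ) * D ^ (n + 2 - 2 * (j + 1)) * G ^ (j + 1)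
            + (Lc n j : ℝ) * D ^ (n + 2 - 2 * (j + 1)) * G ^ (j + 1) := by ring
        _ = D * ((Lc (n + 1) (j + 1) : ℝ) * D ^ (n + 1 - 2 * (j + 1)) * G ^ (j + 1))
            + G * ((Lc n j : ℝ) * D ^ (n - 2 * j) * G ^ j) := by
            nth_rewrite 2 [e2]
            nth_rewrite 1 [e]
            rw [pow_succ]
            ring
  rw [Finset.sum_congr rfl hterm, Finset.sum_add_distrib, ← Finset.mul_sum, ← Finset.mul_sum]
  have c1 : (Lc (n + 2) 0 : ℝ) = 1 := by norm_num [Lc]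
  have c2 : (Lc (n + 1) 0 : ℝ) = 1 := by norm_num [Lc]
  rw [c1, c2]
  have e0 : n + 2 - 2 * 0 = (n + 1 - 2 * 0) + 1 := by omega
  rw [e0, pow_succ]
  ring

lemma gfpl_key (p0 : ℝ) (hp0 : p0 ≠ 0) (p1 g : ℝ → ℝ) (x : ℝ) :
    ∀ n : ℕ, 1 ≤ n → (2 / p0) * GFPL p0 p1 g n x
      = ∑ i ∈ Finset.range (n / 2 + 1),
          (Lc n i : ℝ) * ((2 / p0) * p1 x) ^ (n - 2 * i) * g x ^ i := by
  intro n
  induction n using Nat.strong_induction_on with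
  | _ n ih =>
    intro hn
    match n with
    | 0 => omega
    | 1 =>
      simp [GFPL, Lc]
    | 2 =>
      simp only [GFPL, Lc]
      rw [Finset.sum_range_succ, Finset.sum_range_succ]
      norm_num
      field_simp
    | (m+3) =>
      have h1 := ih (m + 2) (by omega) (by omega)
      have h2 := ih (m + 1) (by omega) (by omega)
      have hs := sum_step ((2 / p0) * p1 x) (g x) (n := m + 1) (by omega)
      have e : m + 1 + 2 = m + 3 := by omega
      rw [e] at hs
      rw [show GFPL p0 p1 g (m + 3) x
          = (2 / p0) * p1 x * GFPL p0 p1 g (m + 2) x + g x * GFPL p0 p1 g (m + 1) x from rfl]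
      rw [hs, ← h1, ← h2]
      ring

theorem gfpl_binomial_formula (p0 : ℝ)
    (hp0 : p0 = 1 ∨ p0 = -1 ∨ p0 = 2 ∨ p0 = -2)
    (p1 g : ℝ → ℝ) (n : ℕ) (hn : 1 ≤ n) (x : ℝ) :
    GFPL p0 p1 g n x =
      (1 / (2 / p0)) *
        ∑ i ∈ Finset.range (n / 2 + 1),
          ((n : ℝ) / ((n : ℝ) - (i : ℝ))) * (Nat.choose (n - i) i : ℝ) *
            ((2 / p0) * p1 x) ^ (n - 2 * i) * g x ^ i := by
  have hp0' : p0 ≠ 0 := by rcases hp0 with h | h | h | h <;> rw [h] <;> norm_num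
  have hα : (2 : ℝ) / p0 ≠ 0 := div_ne_zero two_ne_zero hp0'
  have key := gfpl_key p0 hp0' p1 g x n hn
  have hsum : (∑ i ∈ Finset.range (n / 2 + 1),
          ((n : ℝ) / ((n : ℝ) - (i : ℝ))) * (Nat.choose (n - i) i : ℝ) *
            ((2 / p0) * p1 x) ^ (n - 2 * i) * g x ^ i)
      = ∑ i ∈ Finset.range (n / 2 + 1),
          (Lc n i : ℝ) * ((2 / p0) * p1 x) ^ (n - 2 * i) * g x ^ i := by
    refine Finset.sum_congr rfl fun i hi => ?_
    simp only [Finset.mem_range] at hi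
    have h2i : 2 * i ≤ n := by omega
    have hin : i < n := by omega
    have hne : (n : ℝ) - (i : ℝ) ≠ 0 := by
      have : (i : ℝ) < (n : ℝ) := by exact_mod_cast hin
      linarith
    have hnat := mul_choose_eq n i hn h2i
    have hcast : (n : ℝ) * (Nat.choose (n - i) i : ℝ) = ((n : ℝ) - (i : ℝ)) * (Lc n i : ℝ) := by
      have := congrArg (Nat.cast : ℕ → ℝ) hnat
      push_cast [Nat.cast_sub hin.le] at this
      linarith
    have hcoef : (n : ℝ) / ((n : ℝ) - (i : ℝ)) * (Nat.choose (n - i) i : ℝ) = (Lc n i : ℝ) := by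
      rw [div_mul_eq_mul_div, div_eq_iff hne]
      linarith
    rw [← hcoef]
  rw [hsum, ← key, one_div, inv_mul_cancel_left₀ hα]
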